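/- arXiv:2006.16875 — 3 statements merged into one kernel-verified Lean document; each statement's English description precedes it below -/
import Mathlib

section
/- Let φ : ℝ → ℝ be bounded, continuous, symmetric with center c ∈ ℝ, strictly decreasing on (c, ∞), and not globally constant. For h > 0 let φ_h be its Gaussian mollification φ_h(x) = ∫ (1/√(2π)) φ(x + hy) e^{−y²/2} dy. Then φ_h is differentiable and sgn(φ_h′(x)) = −sgn(x − c) for all x ∈ ℝ; in particular φ_h′(x) < 0 for x > c. -/
/-!
Substituting `u = x + h y` turns `φ_h` into the convolution of `φ` with a Gaussian kernel, which
may be differentiated under the integral sign: `φ_h'(x)` is a positive multiple of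
`∫ φ(x + t) t e^{-t²/(2h²)} dt = ∫_{t > 0} (φ(x + t) - φ(x - t)) t e^{-t²/(2h²)} dt`.
For `x > c` the point `x + t` is farther from `c` than `x - t`, so the integrand is negative.
The symmetry of `φ` about `c` makes `φ_h'` odd about `c`, which gives the other signs.
-/

open MeasureTheory Real Set Filter Topology

theorem StrictAntiOn.Ici_of_continuousWithinAt {α β : Type*} [LinearOrder α]
    [TopologicalSpace α] [OrderTopology α] [DenselyOrdered α] [LinearOrder β]
    [TopologicalSpace β] [OrderClosedTopology β] {f : α → β} {c : α}
    (hf : StrictAntiOn f (Ioi c)) (hc : ContinuousWithinAt f (Ioi c) c) :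
    StrictAntiOn f (Ici c) := by
  intro a ha b _ hab
  rcases (mem_Ici.mp ha).eq_or_lt with rfl | hca
  · obtain ⟨m, ham, hmb⟩ := exists_between hab
    have : NeBot (𝓝[>] c) := nhdsGT_neBot_of_exists_gt ⟨m, ham⟩
    have hfm : f m ≤ f c := by
      refine ge_of_tendsto hc ?_
      filter_upwards [Ioo_mem_nhdsGT ham] with z hz
      exact (hf hz.1 ham hz.2).le
    exact (hf ham (ham.trans hmb) hmb).trans_le hfm
  · exact hf hca (hca.trans hab) hab

section Symmetric

variable {φ : ℝ → ℝ} {c : ℝ}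

theorem apply_add_abs_of_symm (hsym : ∀ s, φ (c - s) = φ (c + s)) (s : ℝ) :
    φ (c + |s|) = φ (c + s) := by
  rcases abs_cases s with ⟨hs, -⟩ | ⟨hs, -⟩
  · rw [hs]
  · rw [hs, ← hsym, sub_neg_eq_add]

theorem apply_add_lt_of_abs_lt (hsym : ∀ s, φ (c - s) = φ (c + s))
    (hdec : StrictAntiOn φ (Ici c)) {s t : ℝ} (hst : |s| < |t|) : φ (c + t) < φ (c + s) := by
  rw [← apply_add_abs_of_symm hsym s, ← apply_add_abs_of_symm hsym t]
  exact hdec (by simp) (by simp) (by linarith)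

theorem apply_add_lt_apply_sub (hsym : ∀ s, φ (c - s) = φ (c + s))
    (hdec : StrictAntiOn φ (Ici c)) {x t : ℝ} (hx : c < x) (ht : 0 < t) :
    φ (x + t) < φ (x - t) := by
  have hlt : |x - t - c| < |x + t - c| := by
    rw [abs_of_pos (by linarith : 0 < x + t - c)]
    exact abs_lt.mpr ⟨by linarith, by linarith⟩
  simpa using apply_add_lt_of_abs_lt hsym hdec hlt

end Symmetric

theorem integral_comp_mul_add_mul_exp (f : ℝ → ℝ) (C x : ℝ) {h : ℝ} (hh : 0 < h) :
    ∫ y, C * f (x + h * y) * exp (-y ^ 2 / 2) =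
      C / h * ∫ u, f u * exp (-(2 * h ^ 2)⁻¹ * (u - x) ^ 2) := by
  have hscale : ∀ y, -y ^ 2 / 2 = -(2 * h ^ 2)⁻¹ * (x + h * y - x) ^ 2 := fun y => by
    field_simp
    ring
  simp_rw [hscale, mul_assoc C]
  rw [integral_const_mul, Measure.integral_comp_mul_left
    (fun t => f (x + t) * exp (-(2 * h ^ 2)⁻¹ * (x + t - x) ^ 2)),
    integral_add_left_eq_self (fun u => f u * exp (-(2 * h ^ 2)⁻¹ * (u - x) ^ 2)),
    abs_inv, abs_of_pos hh, smul_eq_mul, div_eq_mul_inv, mul_assoc]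

theorem hasDerivAt_integral_mul_exp_neg_mul_sq_sub {f : ℝ → ℝ} {M b : ℝ}
    (hf : AEStronglyMeasurable f) (hM : ∀ u, |f u| ≤ M) (hb : 0 < b) (x₀ : ℝ) :
    HasDerivAt (fun x => ∫ u, f u * exp (-b * (u - x) ^ 2))
      (2 * b * ∫ t, f (x₀ + t) * (t * exp (-b * t ^ 2))) x₀ := by
  set F' : ℝ → ℝ → ℝ := fun x u => f u * (2 * b * ((u - x) * exp (-b * (u - x) ^ 2)))
  -- For `|x - x₀| < 1` we have `(u - x)² ≥ (u - x₀)² / 2 - 1`, whence this domination.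
  set bound : ℝ → ℝ := fun u => M * (2 * b * exp b) *
    (|u - x₀| * exp (-(b / 2) * (u - x₀) ^ 2) + exp (-(b / 2) * (u - x₀) ^ 2))
  have hb2 : 0 < b / 2 := by positivity
  have hmeas : ∀ x, AEStronglyMeasurable (fun u => f u * exp (-b * (u - x) ^ 2)) :=
    fun x => hf.mul (by fun_prop : Continuous _).aestronglyMeasurable
  have hint : Integrable fun u => f u * exp (-b * (u - x₀) ^ 2) :=
    ((integrable_exp_neg_mul_sq hb).comp_sub_right x₀).bdd_mul hf
      (.of_forall fun u => (Real.norm_eq_abs _).trans_le (hM u))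
  have hbound_int : Integrable bound :=
    ((((integrable_mul_exp_neg_mul_sq hb2).norm.add (integrable_exp_neg_mul_sq hb2)).comp_sub_right
      x₀).const_mul (M * (2 * b * exp b))).congr (.of_forall fun u => by
        simp [bound, abs_of_pos (exp_pos _)])
  have hderiv : ∀ u x, HasDerivAt (fun x => f u * exp (-b * (u - x) ^ 2)) (F' x u) x := by
    intro u x
    have hquad : HasDerivAt (fun y => -b * (u - y) ^ 2) (2 * b * (u - x)) x :=
      ((((hasDerivAt_id' x).const_sub u).pow 2).const_mul (-b)).congr_deriv (by push_cast; ring)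
    exact (hquad.exp.const_mul (f u)).congr_deriv (by simp only [F']; ring)
  have hF'_le : ∀ u, ∀ x ∈ Metric.ball x₀ 1, ‖F' x u‖ ≤ bound u := by
    intro u x hx
    rw [Metric.mem_ball, Real.dist_eq] at hx
    have hdist : |u - x| ≤ |u - x₀| + 1 := by
      have := abs_sub_le u x₀ x
      rw [abs_sub_comm x₀ x] at this
      linarith
    have hexp : exp (-b * (u - x) ^ 2) ≤ exp b * exp (-(b / 2) * (u - x₀) ^ 2) := by
      rw [← exp_add, exp_le_exp]
      have : (x - x₀) ^ 2 < 1 := by nlinarith [sq_abs (x - x₀), abs_nonneg (x - x₀)]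
      nlinarith [sq_nonneg (u - x - (x - x₀))]
    calc ‖F' x u‖ = |f u| * (2 * b * (|u - x| * exp (-b * (u - x) ^ 2))) := by
          simp [F', abs_of_pos hb]
      _ ≤ M * (2 * b * ((|u - x₀| + 1) * (exp b * exp (-(b / 2) * (u - x₀) ^ 2)))) := by
          gcongr
          · exact (abs_nonneg _).trans (hM u)
          · exact hM u
      _ = bound u := by simp only [bound]; ring
  have hF'_meas : AEStronglyMeasurable (F' x₀) :=
    hf.mul (by fun_prop : Continuous _).aestronglyMeasurable
  refine (hasDerivAt_integral_of_dominated_loc_of_deriv_le (Metric.ball_mem_nhds x₀ one_pos)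
    (.of_forall hmeas) hint hF'_meas (.of_forall hF'_le) hbound_int
    (.of_forall fun u x _ => hderiv u x)).2.congr_deriv ?_
  rw [← integral_add_left_eq_self (F' x₀) x₀, ← integral_const_mul]
  congr 1 with t
  simp only [F', add_sub_cancel_left]
  ring

theorem integral_neg_of_add_comp_neg_neg {g : ℝ → ℝ} (hg : Integrable g)
    (hneg : ∀ t, 0 < t → g t + g (-t) < 0) : ∫ t, g t < 0 := by
  have hne : ∀ t, t ≠ 0 → g t + g (-t) < 0 := by
    intro t ht
    rcases ht.lt_or_gt with ht | ht
    · simpa [add_comm] using hneg (-t) (neg_pos.mpr ht)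
    · exact hneg t ht
  have hpos : 0 < ∫ t, -(g t + g (-t)) := by
    have hint : Integrable fun t => -(g t + g (-t)) := (hg.add hg.comp_neg).neg
    rw [integral_pos_iff_support_of_nonneg_ae _ hint]
    · refine lt_of_lt_of_le ?_ (measure_mono (μ := volume) (s := Ioi 0) fun t ht => ?_)
      · simp
      · exact (neg_pos.mpr (hneg t ht)).ne'
    · filter_upwards [Measure.ae_ne volume 0] with t ht
      exact (neg_pos.mpr (hne t ht)).le
  rw [integral_neg, integral_add hg hg.comp_neg, integral_neg_eq_self] at hpos
  linarith

theorem integral_comp_add_mul_mul_exp_neg_mul_sq_neg {f : ℝ → ℝ} {M b x : ℝ}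
    (hf : AEStronglyMeasurable f) (hM : ∀ u, |f u| ≤ M) (hb : 0 < b)
    (hlt : ∀ t, 0 < t → f (x + t) < f (x - t)) :
    ∫ t, f (x + t) * (t * exp (-b * t ^ 2)) < 0 := by
  refine integral_neg_of_add_comp_neg_neg ?_ fun t ht => ?_
  · exact (integrable_mul_exp_neg_mul_sq hb).bdd_mul (hf.comp_quasiMeasurePreserving
      (measurePreserving_add_left volume x).quasiMeasurePreserving)
      (.of_forall fun t => (Real.norm_eq_abs _).trans_le (hM _))
  · have hpos : 0 < t * exp (-b * t ^ 2) := by positivity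
    have hreflect : f (x + -t) * (-t * exp (-b * (-t) ^ 2)) =
        -(f (x - t) * (t * exp (-b * t ^ 2))) := by
      rw [neg_sq, ← sub_eq_add_neg]
      ring
    rw [hreflect]
    nlinarith [hlt t ht]

theorem integral_comp_reflect_add_mul_odd {f k : ℝ → ℝ} {c : ℝ}
    (hf : ∀ s, f (c - s) = f (c + s)) (hk : ∀ t, k (-t) = -k t) (x : ℝ) :
    ∫ t, f (2 * c - x + t) * k t = -∫ t, f (x + t) * k t := by
  rw [← integral_neg_eq_self, ← integral_neg]
  congr 1 with t
  have hreflect : 2 * c - x + -t = c - (x + t - c) := by ring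
  rw [hreflect, hf, hk, add_sub_cancel, mul_neg]

theorem Real.sign_eq_neg_sign_sub_of_reflect_neg {g : ℝ → ℝ} {c : ℝ}
    (hodd : ∀ x, g (2 * c - x) = -g x) (hneg : ∀ x, c < x → g x < 0) (x : ℝ) :
    Real.sign (g x) = -Real.sign (x - c) := by
  rcases lt_trichotomy x c with hx | rfl | hx
  · have hpos : 0 < g x := by
      have := hneg (2 * c - x) (by linarith)
      rw [hodd] at this
      linarith
    rw [sign_of_pos hpos, sign_of_neg (sub_neg.mpr hx), neg_neg]
  · have hzero : g x = 0 := by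
      have := hodd x
      rw [two_mul, add_sub_cancel_right] at this
      linarith
    rw [hzero, sub_self, sign_zero, neg_zero]
  · rw [sign_of_neg (hneg x hx), sign_of_pos (sub_pos.mpr hx)]

theorem stmt_4_general (φ : ℝ → ℝ) (c : ℝ)
    (hbdd : ∃ M, ∀ x, |φ x| ≤ M) (hcont : Continuous φ)
    (hsym : ∀ x, φ (c - x) = φ (c + x))
    (hdec : StrictAntiOn φ (Set.Ioi c))
    (h : ℝ) (hh : 0 < h) :
    (∀ x : ℝ, DifferentiableAt ℝ
      (fun x : ℝ => ∫ y : ℝ, (1 / Real.sqrt (2 * Real.pi)) * φ (x + h * y) *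
        Real.exp (-y ^ 2 / 2)) x) ∧
    (∀ x : ℝ, Real.sign (deriv
      (fun x : ℝ => ∫ y : ℝ, (1 / Real.sqrt (2 * Real.pi)) * φ (x + h * y) *
        Real.exp (-y ^ 2 / 2)) x) = - Real.sign (x - c)) ∧
    (∀ x : ℝ, c < x → deriv
      (fun x : ℝ => ∫ y : ℝ, (1 / Real.sqrt (2 * Real.pi)) * φ (x + h * y) *
        Real.exp (-y ^ 2 / 2)) x < 0) := by
  obtain ⟨M, hM⟩ := hbdd
  set b : ℝ := (2 * h ^ 2)⁻¹
  have hb : 0 < b := by positivity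
  set K : ℝ := 1 / √(2 * π) / h * (2 * b)
  have hK : 0 < K := by positivity
  set Φ' : ℝ → ℝ := fun x => K * ∫ t, φ (x + t) * (t * exp (-b * t ^ 2))
  have hderiv : ∀ x, HasDerivAt (fun x : ℝ => ∫ y : ℝ, (1 / √(2 * π)) * φ (x + h * y) *
      exp (-y ^ 2 / 2)) (Φ' x) x := fun x => by
    simp_rw [integral_comp_mul_add_mul_exp φ _ _ hh]
    refine ((hasDerivAt_integral_mul_exp_neg_mul_sq_sub hcont.aestronglyMeasurable hM hb
      x).const_mul _).congr_deriv ?_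
    simp only [Φ', K]
    ring
  have hneg : ∀ x, c < x → Φ' x < 0 := fun x hx =>
    mul_neg_of_pos_of_neg hK <| integral_comp_add_mul_mul_exp_neg_mul_sq_neg
      hcont.aestronglyMeasurable hM hb fun _ ht => apply_add_lt_apply_sub hsym
        (hdec.Ici_of_continuousWithinAt hcont.continuousWithinAt) hx ht
  have hodd : ∀ x, Φ' (2 * c - x) = -Φ' x := fun x => by
    simp only [Φ']
    rw [integral_comp_reflect_add_mul_odd (k := fun t => t * exp (-b * t ^ 2)) hsym
      (fun t => by rw [neg_sq, neg_mul]) x, mul_neg]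
  refine ⟨fun x => (hderiv x).differentiableAt, fun x => ?_, fun x hx => ?_⟩
  · rw [(hderiv x).deriv]
    exact Real.sign_eq_neg_sign_sub_of_reflect_neg hodd hneg x
  · rw [(hderiv x).deriv]
    exact hneg x hx

theorem stmt_4 (φ : ℝ → ℝ) (c : ℝ)
    (hbdd : ∃ M, ∀ x, |φ x| ≤ M) (hcont : Continuous φ)
    (hsym : ∀ x, φ (c - x) = φ (c + x))
    (hdec : StrictAntiOn φ (Set.Ioi c))
    (hnonconst : ∃ x y, φ x ≠ φ y)
    (h : ℝ) (hh : 0 < h) :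
    (∀ x : ℝ, DifferentiableAt ℝ
      (fun x : ℝ => ∫ y : ℝ, (1 / Real.sqrt (2 * Real.pi)) * φ (x + h * y) *
        Real.exp (-y ^ 2 / 2)) x) ∧
    (∀ x : ℝ, Real.sign (deriv
      (fun x : ℝ => ∫ y : ℝ, (1 / Real.sqrt (2 * Real.pi)) * φ (x + h * y) *
        Real.exp (-y ^ 2 / 2)) x) = - Real.sign (x - c)) ∧
    (∀ x : ℝ, c < x → deriv
      (fun x : ℝ => ∫ y : ℝ, (1 / Real.sqrt (2 * Real.pi)) * φ (x + h * y) *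
        Real.exp (-y ^ 2 / 2)) x < 0) :=
  stmt_4_general φ c hbdd hcont hsym hdec h hh
end

section
/- Let q_x(t,z) = (1/√(2πt)) exp(−((x−z)² + 2κt(|z|−|x|) + κ²t²)/(2t)) + κ e^{−2κ|z|} ∫_{|x|+|z|−κt}^{∞} (1/√(2πt)) e^{−u²/(2t)} du be the transition density of the one-dimensional diffusion dX_t = −κ sgn(X_t) dt + dB_t started at x. Then for t = 1, x = c = −(a+b)/2 with a < b and a + b ≥ 0, one has ∫_{(a−b)/2}^{(b−a)/2} q_c(1,z) dz = Φ_{−κ}(−a) − e^{−κ(b−a)} Φ_{−κ}(−b), where Φ_μ is the normal cdf with mean μ, variance 1. -/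
open MeasureTheory

/-- Cdf of the normal distribution with mean `μ` and unit variance. -/
noncomputable def normalCdf (μ x : ℝ) : ℝ :=
  ∫ t in Set.Iic x, (1 / Real.sqrt (2 * Real.pi)) * Real.exp (-(t - μ) ^ 2 / 2)

/-- The transition density `q_x(1, z)` of the diffusion
`dX_t = -κ sgn(X_t) dt + dB_t` at time `t = 1`, started at `x`. -/
noncomputable def transDensity (κ x z : ℝ) : ℝ :=
  (1 / Real.sqrt (2 * Real.pi)) *
    Real.exp (-(((x - z) ^ 2 + 2 * κ * (|z| - |x|) + κ ^ 2) / 2)) +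
  κ * Real.exp (-(2 * κ * |z|)) *
    ∫ u in Set.Ici (|x| + |z| - κ),
      (1 / Real.sqrt (2 * Real.pi)) * Real.exp (-u ^ 2 / 2)

/-!
With `x = -m`, `m ≥ 0`, the density `q_x(1, ·)` is, on each half-line, a combination of the
standard Gaussian density `φ` and of its tail `Φ(-·)` with exponential weights. Completing the
square, `e^{2κy} φ(y + κ) = φ(y - κ)`, turns each piece into the derivative of an explicit
combination of `Φ`-values. Over `[-L, L]` with `L = (b - a)/2`, `m = (a + b)/2`, the symmetry
`Φ(x) + Φ(-x) = 1` collapses the boundary terms at `-L`, `0`, `L` to the closed form.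
-/

open Real Set

noncomputable def stdNormalPDF (u : ℝ) : ℝ := (1 / √(2 * π)) * exp (-u ^ 2 / 2)

noncomputable def stdNormalCdf (x : ℝ) : ℝ := ∫ u in Iic x, stdNormalPDF u

local notation "φ" => stdNormalPDF
local notation "Φ" => stdNormalCdf

lemma stdNormalPDF_eq_mul_exp_neg_mul_sq :
    φ = fun u => (1 / √(2 * π)) * exp (-(1 / 2) * u ^ 2) := by
  ext u; rw [stdNormalPDF]; ring_nf

@[fun_prop]
lemma continuous_stdNormalPDF : Continuous φ := by
  unfold stdNormalPDF; fun_prop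

lemma integrable_stdNormalPDF : Integrable φ := by
  rw [stdNormalPDF_eq_mul_exp_neg_mul_sq]
  exact (integrable_exp_neg_mul_sq (by norm_num)).const_mul _

lemma integral_stdNormalPDF : ∫ u, φ u = 1 := by
  rw [stdNormalPDF_eq_mul_exp_neg_mul_sq, integral_const_mul, integral_gaussian,
    show π / (1 / 2) = 2 * π by ring]
  exact one_div_mul_cancel (by positivity)

lemma stdNormalPDF_neg (u : ℝ) : φ (-u) = φ u := by
  rw [stdNormalPDF, stdNormalPDF, neg_sq]

lemma exp_mul_stdNormalPDF_add (κ y : ℝ) : exp (2 * κ * y) * φ (y + κ) = φ (y - κ) := by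
  rw [stdNormalPDF, stdNormalPDF, mul_left_comm, ← exp_add]
  ring_nf

lemma hasDerivAt_stdNormalCdf (x : ℝ) : HasDerivAt Φ (φ x) x := by
  have hΦ : Φ = fun y => Φ 0 + ∫ u in (0 : ℝ)..y, φ u := by
    funext y
    rw [stdNormalCdf, stdNormalCdf, ← intervalIntegral.integral_Iic_sub_Iic
      integrable_stdNormalPDF.integrableOn integrable_stdNormalPDF.integrableOn]
    ring
  rw [hΦ]
  exact (intervalIntegral.integral_hasDerivAt_right
    (continuous_stdNormalPDF.intervalIntegrable _ _)
    (continuous_stdNormalPDF.stronglyMeasurableAtFilter _ _)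
    continuous_stdNormalPDF.continuousAt).const_add _

@[fun_prop]
lemma continuous_stdNormalCdf : Continuous Φ :=
  continuous_iff_continuousAt.2 fun x => (hasDerivAt_stdNormalCdf x).continuousAt

lemma integral_Ici_stdNormalPDF (x : ℝ) : ∫ u in Ici x, φ u = Φ (-x) := by
  rw [stdNormalCdf, ← neg_neg x, ← integral_comp_neg_Ioi]
  simp only [neg_neg, stdNormalPDF_neg, integral_Ici_eq_integral_Ioi]

lemma stdNormalCdf_add_stdNormalCdf_neg (x : ℝ) : Φ x + Φ (-x) = 1 := by
  rw [← integral_Ici_stdNormalPDF, integral_Ici_eq_integral_Ioi, stdNormalCdf,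
    intervalIntegral.integral_Iic_add_Ioi integrable_stdNormalPDF.integrableOn
      integrable_stdNormalPDF.integrableOn, integral_stdNormalPDF]

lemma setIntegral_Iic_comp_sub_right (f : ℝ → ℝ) (c x : ℝ) :
    ∫ t in Iic x, f (t - c) = ∫ t in Iic (x - c), f t := by
  have hemb : MeasurableEmbedding (fun t : ℝ => t - c) :=
    (Homeomorph.subRight c).isClosedEmbedding.measurableEmbedding
  have hpre : (fun t : ℝ => t - c) ⁻¹' Iic (x - c) = Iic x := by
    ext t; simp
  conv_lhs => rw [← hpre]
  exact (measurePreserving_sub_right volume c).setIntegral_preimage_emb hemb f _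

lemma normalCdf_eq_stdNormalCdf (μ x : ℝ) : normalCdf μ x = Φ (x - μ) :=
  setIntegral_Iic_comp_sub_right φ μ x

lemma transDensity_eq (κ x z : ℝ) :
    transDensity κ x z = (1 / √(2 * π)) *
      exp (-(((x - z) ^ 2 + 2 * κ * (|z| - |x|) + κ ^ 2) / 2)) +
      κ * exp (-(2 * κ * |z|)) * Φ (κ - |x| - |z|) := by
  rw [transDensity, show (fun u : ℝ => (1 / √(2 * π)) * exp (-u ^ 2 / 2)) = φ from rfl,
    integral_Ici_stdNormalPDF]
  ring_nf

lemma continuous_transDensity (κ x : ℝ) : Continuous (transDensity κ x) := by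
  simp only [funext (transDensity_eq κ x)]
  fun_prop

section HalfLines

variable {κ m z : ℝ}

lemma transDensity_neg_of_nonneg (hm : 0 ≤ m) (hz : 0 ≤ z) :
    transDensity κ (-m) z = exp (-(2 * κ * z)) * (φ (z + m - κ) + κ * Φ (κ - z - m)) := by
  rw [transDensity_eq, abs_neg, abs_of_nonneg hm, abs_of_nonneg hz, stdNormalPDF,
    mul_add, mul_left_comm, ← exp_add]
  ring_nf

lemma transDensity_neg_of_nonpos (hm : 0 ≤ m) (hz : z ≤ 0) :
    transDensity κ (-m) z = φ (z + m - κ) + κ * exp (2 * κ * z) * Φ (z - m + κ) := by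
  rw [transDensity_eq, abs_neg, abs_of_nonneg hm, abs_of_nonpos hz, stdNormalPDF]
  ring_nf

end HalfLines

noncomputable def transDensityPrimitiveRight (κ m z : ℝ) : ℝ :=
  (exp (2 * κ * m) * Φ (z + m + κ) - exp (-(2 * κ * z)) * Φ (κ - z - m)) / 2

noncomputable def transDensityPrimitiveLeft (κ m z : ℝ) : ℝ :=
  Φ (z + m - κ) + (exp (2 * κ * z) * Φ (z - m + κ) - exp (2 * κ * m) * Φ (z - m - κ)) / 2

lemma hasDerivAt_stdNormalCdf_comp {f : ℝ → ℝ} {f' z : ℝ} (hf : HasDerivAt f f' z) :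
    HasDerivAt (fun y => Φ (f y)) (φ (f z) * f') z :=
  (hasDerivAt_stdNormalCdf (f z)).comp z hf

lemma hasDerivAt_transDensityPrimitiveRight (κ m z : ℝ) :
    HasDerivAt (transDensityPrimitiveRight κ m)
      (exp (-(2 * κ * z)) * (φ (z + m - κ) + κ * Φ (κ - z - m))) z := by
  have hΦ₁ := hasDerivAt_stdNormalCdf_comp (((hasDerivAt_id' z).add_const m).add_const κ)
  have hΦ₂ := hasDerivAt_stdNormalCdf_comp (((hasDerivAt_id' z).const_sub κ).sub_const m)
  have hexp := (((hasDerivAt_id' z).const_mul (2 * κ)).fun_neg).exp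
  have htilt : exp (2 * κ * m) * φ (z + m + κ) = exp (-(2 * κ * z)) * φ (z + m - κ) := by
    rw [← exp_mul_stdNormalPDF_add κ (z + m), ← mul_assoc, ← exp_add]
    ring_nf
  have hsymm : φ (κ - z - m) = φ (z + m - κ) := by
    rw [← stdNormalPDF_neg]; ring_nf
  refine (((hΦ₁.const_mul (exp (2 * κ * m))).fun_sub
    (hexp.fun_mul hΦ₂)).div_const 2).congr_deriv ?_
  rw [hsymm]
  linear_combination (1 / 2 : ℝ) * htilt

lemma hasDerivAt_transDensityPrimitiveLeft (κ m z : ℝ) :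
    HasDerivAt (transDensityPrimitiveLeft κ m)
      (φ (z + m - κ) + κ * exp (2 * κ * z) * Φ (z - m + κ)) z := by
  have hΦ₁ := hasDerivAt_stdNormalCdf_comp (((hasDerivAt_id' z).add_const m).sub_const κ)
  have hΦ₂ := hasDerivAt_stdNormalCdf_comp (((hasDerivAt_id' z).sub_const m).add_const κ)
  have hΦ₃ := hasDerivAt_stdNormalCdf_comp (((hasDerivAt_id' z).sub_const m).sub_const κ)
  have hexp := ((hasDerivAt_id' z).const_mul (2 * κ)).exp
  have htilt : exp (2 * κ * z) * φ (z - m + κ) = exp (2 * κ * m) * φ (z - m - κ) := by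
    rw [← exp_mul_stdNormalPDF_add κ (z - m), ← mul_assoc, ← exp_add]
    ring_nf
  refine (hΦ₁.fun_add (((hexp.fun_mul hΦ₂).fun_sub
    (hΦ₃.const_mul (exp (2 * κ * m)))).div_const 2)).congr_deriv ?_
  linear_combination (1 / 2 : ℝ) * htilt

section Integrals

variable {κ m L : ℝ}

lemma integral_transDensity_neg_of_nonneg (hm : 0 ≤ m) (hL : 0 ≤ L) :
    ∫ z in 0..L, transDensity κ (-m) z =
      transDensityPrimitiveRight κ m L - transDensityPrimitiveRight κ m 0 := by
  refine intervalIntegral.integral_eq_sub_of_hasDerivAt_of_le hL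
    (fun z _ => (hasDerivAt_transDensityPrimitiveRight κ m z).continuousAt.continuousWithinAt)
    (fun z hz => ?_) ((continuous_transDensity κ (-m)).intervalIntegrable _ _)
  rw [transDensity_neg_of_nonneg hm hz.1.le]
  exact hasDerivAt_transDensityPrimitiveRight κ m z

lemma integral_transDensity_neg_of_nonpos (hm : 0 ≤ m) (hL : 0 ≤ L) :
    ∫ z in -L..0, transDensity κ (-m) z =
      transDensityPrimitiveLeft κ m 0 - transDensityPrimitiveLeft κ m (-L) := by
  refine intervalIntegral.integral_eq_sub_of_hasDerivAt_of_le (neg_nonpos.2 hL)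
    (fun z _ => (hasDerivAt_transDensityPrimitiveLeft κ m z).continuousAt.continuousWithinAt)
    (fun z hz => ?_) ((continuous_transDensity κ (-m)).intervalIntegrable _ _)
  rw [transDensity_neg_of_nonpos hm hz.2.le]
  exact hasDerivAt_transDensityPrimitiveLeft κ m z

lemma integral_transDensity_neg_symm (hm : 0 ≤ m) (hL : 0 ≤ L) :
    ∫ z in -L..L, transDensity κ (-m) z =
      Φ (κ + L - m) - exp (-(2 * κ * L)) * Φ (κ - L - m) := by
  rw [← intervalIntegral.integral_add_adjacent_intervals
      ((continuous_transDensity κ (-m)).intervalIntegrable _ 0)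
      ((continuous_transDensity κ (-m)).intervalIntegrable 0 _),
    integral_transDensity_neg_of_nonpos hm hL, integral_transDensity_neg_of_nonneg hm hL]
  simp only [transDensityPrimitiveLeft, transDensityPrimitiveRight]
  have h₁ := stdNormalCdf_add_stdNormalCdf_neg (m + κ)
  have h₂ := stdNormalCdf_add_stdNormalCdf_neg (L + m + κ)
  have h₃ := stdNormalCdf_add_stdNormalCdf_neg (κ - m)
  have h₄ := stdNormalCdf_add_stdNormalCdf_neg (κ + L - m)
  simp only [mul_zero, neg_zero, exp_zero]
  ring_nf at h₁ h₂ h₃ h₄ ⊢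
  linear_combination (exp (m * κ * 2) / 2) * (h₂ - h₁) + h₃ - h₄

end Integrals

theorem stmt_13_general (κ a b : ℝ) (hab : a < b) (hsum : 0 ≤ a + b) :
    (∫ z in Set.Icc ((a - b) / 2) ((b - a) / 2),
        transDensity κ (-(a + b) / 2) z) =
      normalCdf (-κ) (-a) - Real.exp (-κ * (b - a)) * normalCdf (-κ) (-b) := by
  have hL : 0 ≤ (b - a) / 2 := by linarith
  rw [integral_Icc_eq_integral_Ioc, show (a - b) / 2 = -((b - a) / 2) by ring,
    ← intervalIntegral.integral_of_le (neg_le_self hL),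
    show -(a + b) / 2 = -((a + b) / 2) by ring,
    integral_transDensity_neg_symm (by linarith) hL, normalCdf_eq_stdNormalCdf,
    normalCdf_eq_stdNormalCdf]
  ring_nf

theorem stmt_13 (κ a b : ℝ) (hκ : 0 < κ) (hab : a < b) (hsum : 0 ≤ a + b) :
    (∫ z in Set.Icc ((a - b) / 2) ((b - a) / 2),
        transDensity κ (-(a + b) / 2) z) =
      normalCdf (-κ) (-a) - Real.exp (-κ * (b - a)) * normalCdf (-κ) (-b) :=
  stmt_13_general κ a b hab hsum
end

section
/- Let ℒ be a set of mutually equivalent probability measures on a measurable space and 𝒫^{IID} the associated IID set on the infinite product. Then any two measures P, Q ∈ 𝒫^{IID} are equivalent on each finite σ-algebra 𝒢_n (generated by the first n coordinates). The proof is by induction on n: equivalence on 𝒢₁ follows from equivalence of measures in ℒ, and the inductive step uses P(A) = 0 ⟺ P({E_P[1_A|𝒢_{n−1}] > 0}) = 0 together with the fact that the sets {E_P[1_A|𝒢_{n−1}] > 0} and {E_Q[1_A|𝒢_{n−1}] > 0} coincide by equivalence of one-step conditionals. -/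
/-!
Induction on `n`. On `𝒢₀` every probability measure vanishes exactly on `∅`. For the step, the
one-step-ahead decomposition `P(A) = ∫ λₓ(Aₓ) dP(x)` over histories `x` of length `n` shows that
`P(A) = 0` iff the set of histories with `λₓ(Aₓ) > 0` is `P`-null. Since the measures of `ℒ` are
mutually equivalent, that set is the same whichever conditionals from `ℒ` are used, hence the same
for `P` and `Q`, and the induction hypothesis applies to it.
-/

open MeasureTheory

/-- Projection of an infinite trajectory onto its first `n` coordinates. -/
def proj {Ωb : Type*} (n : ℕ) (ω : ℕ → Ωb) : Fin n → Ωb := fun i => ω i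

/-- `P` belongs to the IID model `𝒫^{IID}` generated by `ℒ`: for each `n`, the
one-step-ahead conditionals of `P` form a measurable kernel with values in `ℒ`. -/
def MemIID {Ωb : Type*} [MeasurableSpace Ωb] (ℒ : Set (Measure Ωb))
    (P : Measure (ℕ → Ωb)) : Prop :=
  ∀ n : ℕ, ∃ lam : (Fin n → Ωb) → Measure Ωb,
    (∀ x, lam x ∈ ℒ) ∧
    (∀ B : Set Ωb, MeasurableSet B → Measurable fun x => lam x B) ∧
    ∀ A : Set (Fin (n + 1) → Ωb), MeasurableSet A →
      P.map (proj (n + 1)) A =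
        ∫⁻ x, lam x {y | Fin.snoc x y ∈ A} ∂(P.map (proj n))

open ProbabilityTheory

lemma measure_eq_zero_iff_eq_empty_of_subsingleton {β : Type*} [MeasurableSpace β] [Subsingleton β]
    (μ : Measure β) [NeZero μ] (s : Set β) : μ s = 0 ↔ s = ∅ := by
  rcases s.eq_empty_or_nonempty with rfl | hs
  · simp
  · have : Nonempty β := ⟨hs.some⟩
    simp [hs.eq_univ, NeZero.ne μ]

lemma measurable_measure_prodMk_left_of_isProbabilityMeasure {β γ : Type*} [MeasurableSpace β]
    [MeasurableSpace γ] {lam : β → Measure γ} (hprob : ∀ x, IsProbabilityMeasure (lam x))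
    (hmeas : ∀ s, MeasurableSet s → Measurable fun x => lam x s) {t : Set (β × γ)}
    (ht : MeasurableSet t) : Measurable fun x => lam x (Prod.mk x ⁻¹' t) := by
  let κ : Kernel β γ := ⟨lam, Measure.measurable_of_measurable_coe _ hmeas⟩
  have : IsMarkovKernel κ := ⟨hprob⟩
  exact κ.measurable_kernel_prodMk_left ht

section

variable {α : Type*} [MeasurableSpace α]

lemma measurable_proj (n : ℕ) : Measurable (proj (Ωb := α) n) :=
  measurable_pi_lambda _ fun i => measurable_pi_apply (i : ℕ)

lemma measurable_snoc_prod (n : ℕ) :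
    Measurable fun p : (Fin n → α) × α => (Fin.snoc p.1 p.2 : Fin (n + 1) → α) := by
  refine measurable_pi_lambda _ fun i => Fin.lastCases ?_ (fun j => ?_) i
  · simpa using measurable_snd
  · simpa [Function.comp_def] using (measurable_pi_apply j).comp measurable_fst

/-- The event `{E[1_A | 𝒢ₙ] > 0}`, computed from the one-step-ahead conditionals `lam`. -/
def condPosSet {n : ℕ} (lam : (Fin n → α) → Measure α) (A : Set (Fin (n + 1) → α)) :
    Set (Fin n → α) :=
  {x | lam x {y | Fin.snoc x y ∈ A} ≠ 0}

lemma condPosSet_eq_of_absolutelyContinuous {n : ℕ} {lam lam' : (Fin n → α) → Measure α}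
    (h : ∀ x, lam x ≪ lam' x) (h' : ∀ x, lam' x ≪ lam x) (A : Set (Fin (n + 1) → α)) :
    condPosSet lam A = condPosSet lam' A := by
  ext x
  exact not_congr ⟨fun hx => h' x hx, fun hx => h x hx⟩

lemma MemIID.exists_map_proj_succ_eq_zero_iff {ℒ : Set (Measure α)} {P : Measure (ℕ → α)}
    (hP : MemIID ℒ P) (hprobL : ∀ q ∈ ℒ, IsProbabilityMeasure q) (n : ℕ) :
    ∃ lam : (Fin n → α) → Measure α, (∀ x, lam x ∈ ℒ) ∧
      ∀ A, MeasurableSet A → MeasurableSet (condPosSet lam A) ∧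
        (P.map (proj (n + 1)) A = 0 ↔ P.map (proj n) (condPosSet lam A) = 0) := by
  obtain ⟨lam, hlamL, hlam_meas, hdecomp⟩ := hP n
  refine ⟨lam, hlamL, fun A hA => ?_⟩
  have hsection : Measurable fun x => lam x {y | Fin.snoc x y ∈ A} :=
    measurable_measure_prodMk_left_of_isProbabilityMeasure (fun x => hprobL _ (hlamL x))
      hlam_meas (measurable_snoc_prod n hA)
  refine ⟨(hsection (measurableSet_singleton 0)).compl, ?_⟩
  have hpos := lintegral_pos_iff_support (μ := P.map (proj n)) hsection
  rw [pos_iff_ne_zero, pos_iff_ne_zero] at hpos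
  rw [hdecomp A hA, ← not_iff_not]
  exact hpos

end

theorem stmt_17_general {Ωb : Type*} [MeasurableSpace Ωb]
    (ℒ : Set (Measure Ωb))
    (hprobL : ∀ q ∈ ℒ, IsProbabilityMeasure q)
    (hequivL : ∀ p ∈ ℒ, ∀ q ∈ ℒ, p ≪ q)
    (P Q : Measure (ℕ → Ωb)) (hP : MemIID ℒ P) (hQ : MemIID ℒ Q)
    (hPp : IsProbabilityMeasure P) (hQp : IsProbabilityMeasure Q)
    (n : ℕ) (A : Set (Fin n → Ωb)) (hA : MeasurableSet A) :
    P.map (proj n) A = 0 ↔ Q.map (proj n) A = 0 := by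
  induction n with
  | zero =>
    have := Measure.isProbabilityMeasure_map (μ := P) (measurable_proj 0).aemeasurable
    have := Measure.isProbabilityMeasure_map (μ := Q) (measurable_proj 0).aemeasurable
    rw [measure_eq_zero_iff_eq_empty_of_subsingleton, measure_eq_zero_iff_eq_empty_of_subsingleton]
  | succ n ih =>
    obtain ⟨lamP, hlamP, hPzero⟩ := hP.exists_map_proj_succ_eq_zero_iff hprobL n
    obtain ⟨lamQ, hlamQ, hQzero⟩ := hQ.exists_map_proj_succ_eq_zero_iff hprobL n
    obtain ⟨hmeas, hPA⟩ := hPzero A hA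
    rw [hPA, (hQzero A hA).2, condPosSet_eq_of_absolutelyContinuous
      (fun x => hequivL _ (hlamQ x) _ (hlamP x)) (fun x => hequivL _ (hlamP x) _ (hlamQ x))]
    exact ih _ hmeas

theorem stmt_17 {Ωb : Type*} [MeasurableSpace Ωb]
    (ℒ : Set (Measure Ωb)) (hne : ℒ.Nonempty)
    (hprobL : ∀ q ∈ ℒ, IsProbabilityMeasure q)
    (hequivL : ∀ p ∈ ℒ, ∀ q ∈ ℒ, p ≪ q)
    (P Q : Measure (ℕ → Ωb)) (hP : MemIID ℒ P) (hQ : MemIID ℒ Q)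
    (hPp : IsProbabilityMeasure P) (hQp : IsProbabilityMeasure Q)
    (n : ℕ) (A : Set (Fin n → Ωb)) (hA : MeasurableSet A) :
    P.map (proj n) A = 0 ↔ Q.map (proj n) A = 0 :=
  stmt_17_general ℒ hprobL hequivL P Q hP hQ hPp hQp n A hA
end
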